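/- arXiv:1610.01845 — 2 statements merged into one kernel-verified Lean document; each statement's English description precedes it below -/
import Mathlib

section
/- The set S = {(p,μ) ∈ ℝ² : p > 0 and the function y ↦ E(y,p,μ) has a unique global maximum point ȳ with ∂²E/∂y²(ȳ,p,μ) < 0} is an open subset of ℝ². -/
/-- The single-cell partition function `K(y,p,μ)` with cell volume `υ` and ratio `a`. -/
noncomputable def K (υ a y p μ : ℝ) : ℝ :=
  ∑' n : ℕ, (υ ^ n / (Nat.factorial n : ℝ)) *
    Real.exp ((y + μ) * n - (a * p / 2) * (n : ℝ) ^ 2)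

/-- The function `E(y,p,μ) = -y²/(2p) + ln K(y,p,μ)`. -/
noncomputable def E (υ a y p μ : ℝ) : ℝ :=
  -(y ^ 2) / (2 * p) + Real.log (K υ a y p μ)

/-!
Nondegenerate unique maxima persist under perturbation of the parameters. Near the maximiser
`ȳ` of `E(·, p₀, μ₀)`, joint continuity of `∂²E/∂y²` keeps it negative on a fixed band
`[ȳ - δ, ȳ + δ]` for nearby `(p, μ)`, and `∂E/∂y` keeps its signs at the band's ends, so
`E(·, p, μ)` has exactly one critical point in the band, a strict maximum there. Away from the band,
`E(y, p₀, μ₀) < E(ȳ, p₀, μ₀)`; on a compact set of `y` this strict inequality survives small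
changes of `(p, μ)` (tube lemma), and for large `|y|` the Gaussian factor gives the uniform bound
`E ≤ -(1 - 1/a) y² / (2p) + υ e^μ`, which is where `a > 1` enters.
-/

open Set Filter Topology Function

theorem forall_ne_lt_iff_forall_le_and_unique {α β : Type*} [LinearOrder β] {f : α → β} {c : α} :
    (∀ y ≠ c, f y < f c) ↔ (∀ y, f y ≤ f c) ∧ ∀ c', (∀ y, f y ≤ f c') → c' = c := by
  refine ⟨fun h => ⟨fun y => ?_, fun c' hc' => ?_⟩, fun ⟨hle, huniq⟩ y hy => ?_⟩
  · rcases eq_or_ne y c with rfl | hy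
    · exact le_rfl
    · exact (h y hy).le
  · by_contra hne
    exact (h c' hne).not_ge (hc' c)
  · exact (hle y).lt_of_ne fun hyc => hy (huniq y fun z => hyc ▸ hle z)

theorem ContinuousAt.uncurry_left {X Y Z : Type*} [TopologicalSpace X] [TopologicalSpace Y]
    [TopologicalSpace Z] {f : X → Y → Z} {x : X} {y : Y} (h : ContinuousAt (uncurry f) (x, y)) :
    ContinuousAt (f x) y :=
  h.comp_of_eq (continuousAt_const.prodMk continuousAt_id) rfl

theorem strictMonoOn_Icc_of_hasDerivAt_pos {f f' : ℝ → ℝ} {a b : ℝ}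
    (hf : ∀ y, HasDerivAt f (f' y) y) (hpos : ∀ y ∈ Ioo a b, 0 < f' y) :
    StrictMonoOn f (Icc a b) :=
  strictMonoOn_of_deriv_pos (convex_Icc a b) (fun y _ => (hf y).continuousAt.continuousWithinAt)
    fun y hy => (hf y).deriv ▸ hpos y (interior_Icc (a := a) ▸ hy)

theorem strictAntiOn_Icc_of_hasDerivAt_neg {f f' : ℝ → ℝ} {a b : ℝ}
    (hf : ∀ y, HasDerivAt f (f' y) y) (hneg : ∀ y ∈ Ioo a b, f' y < 0) :
    StrictAntiOn f (Icc a b) :=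
  strictAntiOn_of_deriv_neg (convex_Icc a b) (fun y _ => (hf y).continuousAt.continuousWithinAt)
    fun y hy => (hf y).deriv ▸ hneg y (interior_Icc (a := a) ▸ hy)

theorem exists_forall_ne_lt_Icc_of_deriv2_neg {f f' f'' : ℝ → ℝ} {a b : ℝ} (hab : a ≤ b)
    (hf : ∀ y, HasDerivAt f (f' y) y) (hf' : ∀ y, HasDerivAt f' (f'' y) y)
    (hneg : ∀ y ∈ Icc a b, f'' y < 0) (ha : 0 < f' a) (hb : f' b < 0) :
    ∃ c ∈ Icc a b, ∀ y ∈ Icc a b, y ≠ c → f y < f c := by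
  have hanti : StrictAntiOn f' (Icc a b) :=
    strictAntiOn_Icc_of_hasDerivAt_neg hf' fun y hy => hneg y (Ioo_subset_Icc_self hy)
  obtain ⟨c, hc, hc0⟩ := intermediate_value_Icc' hab
    (fun y _ => (hf' y).continuousAt.continuousWithinAt) ⟨hb.le, ha.le⟩
  have hmono : StrictMonoOn f (Icc a c) := strictMonoOn_Icc_of_hasDerivAt_pos hf fun y hy =>
    hc0 ▸ hanti ⟨hy.1.le, hy.2.le.trans hc.2⟩ hc hy.2
  have hanti' : StrictAntiOn f (Icc c b) := strictAntiOn_Icc_of_hasDerivAt_neg hf fun y hy =>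
    hc0 ▸ hanti hc ⟨hc.1.trans hy.1.le, hy.2.le⟩ hy.1
  refine ⟨c, hc, fun y hy hyc => ?_⟩
  rcases hyc.lt_or_gt with hlt | hgt
  · exact hmono ⟨hy.1, hlt.le⟩ ⟨hc.1, le_rfl⟩ hlt
  · exact hanti' ⟨le_rfl, hc.2⟩ ⟨hgt.le, hy.2⟩ hgt

theorem eventually_forall_notMem_lt_of_tendsto_cocompact {Y P : Type*} [TopologicalSpace Y]
    [TopologicalSpace P] {f : Y → P → ℝ} {q₀ : P} {y₀ : Y} {U : Set Y} (hU : IsOpen U)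
    (hcont : ∀ y, ContinuousAt (uncurry f) (y, q₀))
    (hcoer : Tendsto (uncurry f) (cocompact Y ×ˢ 𝓝 q₀) atBot)
    (hlt : ∀ y ∉ U, f y q₀ < f y₀ q₀) :
    ∀ᶠ q in 𝓝 q₀, ∀ y ∉ U, f y q < f y₀ q := by
  obtain ⟨far, hfar, near, hnear, hbound⟩ :=
    eventually_prod_iff.1 (hcoer.eventually_lt_atBot (f y₀ q₀ - 1))
  obtain ⟨K, hK, hKfar⟩ := mem_cocompact.1 hfar
  have hcont₀ : ContinuousAt (f y₀) q₀ := (hcont y₀).uncurry_left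
  have hcenter : ∀ᶠ q in 𝓝 q₀, f y₀ q₀ - 1 < f y₀ q :=
    continuousAt_const.eventually_lt hcont₀ (sub_one_lt _)
  have htube : ∀ᶠ q in 𝓝 q₀, ∀ y ∈ K \ U, f y q < f y₀ q := by
    refine (hK.diff hU).eventually_forall_of_forall_eventually fun y hy => ?_
    have h₁ : ContinuousAt (fun z : P × Y => f z.2 z.1) (q₀, y) :=
      (hcont y).comp_of_eq continuous_swap.continuousAt rfl
    have h₂ : ContinuousAt (fun z : P × Y => f y₀ z.1) (q₀, y) :=
      hcont₀.comp continuousAt_fst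
    exact h₁.eventually_lt h₂ (hlt y hy.2)
  filter_upwards [hnear, hcenter, htube] with q hq hqc hqt y hy
  by_cases hyK : y ∈ K
  · exact hqt y ⟨hyK, hy⟩
  · exact (hbound (hKfar hyK) hq).trans hqc

theorem exists_pos_eventually_exists_forall_ne_lt_Icc_of_deriv2_neg {P : Type*}
    [TopologicalSpace P] {f f' f'' : ℝ → P → ℝ} {q₀ : P} {ybar : ℝ}
    (hf : ∀ᶠ q in 𝓝 q₀, ∀ y, HasDerivAt (f · q) (f' y q) y)
    (hf' : ∀ᶠ q in 𝓝 q₀, ∀ y, HasDerivAt (f' · q) (f'' y q) y)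
    (hcont' : ∀ y, ContinuousAt (uncurry f') (y, q₀))
    (hcont'' : ContinuousAt (uncurry f'') (ybar, q₀))
    (hcrit : f' ybar q₀ = 0) (hneg : f'' ybar q₀ < 0) :
    ∃ δ > 0, ∀ᶠ q in 𝓝 q₀, ∃ c ∈ Icc (ybar - δ) (ybar + δ), f'' c q < 0 ∧
      ∀ y ∈ Icc (ybar - δ) (ybar + δ), y ≠ c → f y q < f c q := by
  have hneg_near : ∀ᶠ x in 𝓝 ybar ×ˢ 𝓝 q₀, uncurry f'' x < 0 := by
    rw [← nhds_prod_eq]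
    exact hcont''.eventually (gt_mem_nhds hneg)
  obtain ⟨near_y, hny, near_q, hnq, hneg_prod⟩ := eventually_prod_iff.1 hneg_near
  obtain ⟨δ, hδ, hball⟩ := Metric.nhds_basis_closedBall.mem_iff.1 hny
  rw [Real.closedBall_eq_Icc] at hball
  have hband : ∀ᶠ q in 𝓝 q₀, ∀ y ∈ Icc (ybar - δ) (ybar + δ), f'' y q < 0 :=
    hnq.mono fun q hq y hy => hneg_prod (hball hy) hq
  have hanti₀ : StrictAntiOn (f' · q₀) (Icc (ybar - δ) (ybar + δ)) :=
    strictAntiOn_Icc_of_hasDerivAt_neg hf'.self_of_nhds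
      fun y hy => hband.self_of_nhds y (Ioo_subset_Icc_self hy)
  have hybar : ybar ∈ Icc (ybar - δ) (ybar + δ) := ⟨by linarith, by linarith⟩
  have hleft : 0 < f' (ybar - δ) q₀ :=
    hcrit ▸ hanti₀ ⟨le_rfl, by linarith⟩ hybar (by linarith)
  have hright : f' (ybar + δ) q₀ < 0 :=
    hcrit ▸ hanti₀ hybar ⟨by linarith, le_rfl⟩ (by linarith)
  refine ⟨δ, hδ, ?_⟩
  filter_upwards [hf, hf', hband, (hcont' _).uncurry_left.eventually (lt_mem_nhds hleft),
    (hcont' _).uncurry_left.eventually (gt_mem_nhds hright)]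
    with q hfq hf'q hbandq hleftq hrightq
  obtain ⟨c, hc, hcmax⟩ := exists_forall_ne_lt_Icc_of_deriv2_neg (by linarith) hfq hf'q hbandq
    hleftq hrightq
  exact ⟨c, hc, hbandq c hc, hcmax⟩

theorem eventually_exists_forall_ne_lt_of_deriv2_neg {P : Type*} [TopologicalSpace P]
    {f f' f'' : ℝ → P → ℝ} {q₀ : P} {ybar : ℝ}
    (hf : ∀ᶠ q in 𝓝 q₀, ∀ y, HasDerivAt (f · q) (f' y q) y)
    (hf' : ∀ᶠ q in 𝓝 q₀, ∀ y, HasDerivAt (f' · q) (f'' y q) y)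
    (hcont : ∀ y, ContinuousAt (uncurry f) (y, q₀))
    (hcont' : ∀ y, ContinuousAt (uncurry f') (y, q₀))
    (hcont'' : ContinuousAt (uncurry f'') (ybar, q₀))
    (hcoer : Tendsto (uncurry f) (cocompact ℝ ×ˢ 𝓝 q₀) atBot)
    (hmax : ∀ y ≠ ybar, f y q₀ < f ybar q₀) (hneg : f'' ybar q₀ < 0) :
    ∀ᶠ q in 𝓝 q₀, ∃ c, (∀ y ≠ c, f y q < f c q) ∧ f'' c q < 0 := by
  have hcrit : f' ybar q₀ = 0 :=
    IsLocalMax.hasDerivAt_eq_zero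
      (Eventually.of_forall (forall_ne_lt_iff_forall_le_and_unique.1 hmax).1)
      (hf.self_of_nhds ybar)
  obtain ⟨δ, hδ, hband⟩ :=
    exists_pos_eventually_exists_forall_ne_lt_Icc_of_deriv2_neg hf hf' hcont' hcont'' hcrit hneg
  have hout := eventually_forall_notMem_lt_of_tendsto_cocompact
    (isOpen_Ioo (a := ybar - δ) (b := ybar + δ)) hcont hcoer
    fun y hy => hmax y <| by rintro rfl; exact hy ⟨by linarith, by linarith⟩
  filter_upwards [hband, hout] with q ⟨c, hc, hc₂, hcmax⟩ hout
  have hybar : ybar ∈ Icc (ybar - δ) (ybar + δ) := ⟨by linarith, by linarith⟩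
  refine ⟨c, fun y hyc => ?_, hc₂⟩
  by_cases hy : y ∈ Ioo (ybar - δ) (ybar + δ)
  · exact hcmax y (Ioo_subset_Icc_self hy) hyc
  · refine (hout y hy).trans_le ?_
    rcases eq_or_ne ybar c with h | h
    · exact h ▸ le_rfl
    · exact (hcmax ybar hybar h).le

section PartitionFunction

variable {υ a : ℝ}

noncomputable def Kterm (υ a : ℝ) (k : ℕ) (y p μ : ℝ) (n : ℕ) : ℝ :=
  (n : ℝ) ^ k * (υ ^ n / (Nat.factorial n : ℝ)) *
    Real.exp ((y + μ) * n - (a * p / 2) * (n : ℝ) ^ 2)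

noncomputable def Kmoment (υ a : ℝ) (k : ℕ) (y p μ : ℝ) : ℝ := ∑' n : ℕ, Kterm υ a k y p μ n

theorem summable_pow_mul_pow_div_factorial (k : ℕ) {r : ℝ} (hr : 0 ≤ r) :
    Summable (fun n : ℕ => (n : ℝ) ^ k * (r ^ n / (Nat.factorial n : ℝ))) := by
  refine Summable.of_nonneg_of_le (fun n => by positivity) (fun n => ?_)
    (Real.summable_pow_div_factorial ((2 : ℝ) ^ k * r))
  have hpow : (n : ℝ) ^ k ≤ ((2 : ℝ) ^ k) ^ n := calc
    (n : ℝ) ^ k ≤ ((2 : ℝ) ^ n) ^ k :=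
      pow_le_pow_left₀ n.cast_nonneg (by exact_mod_cast n.lt_two_pow_self.le) k
    _ = ((2 : ℝ) ^ k) ^ n := by rw [← pow_mul, ← pow_mul, Nat.mul_comm]
  calc (n : ℝ) ^ k * (r ^ n / n.factorial) ≤ ((2 : ℝ) ^ k) ^ n * (r ^ n / n.factorial) := by
        gcongr
    _ = ((2 : ℝ) ^ k * r) ^ n / n.factorial := by rw [mul_pow]; ring

theorem Kterm_nonneg (hυ : 0 ≤ υ) (k : ℕ) (y p μ : ℝ) (n : ℕ) : 0 ≤ Kterm υ a k y p μ n := by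
  unfold Kterm; positivity

theorem Kterm_le {y p μ B : ℝ} (hυ : 0 ≤ υ) (hap : 0 ≤ a * p) (hB : y + μ ≤ B) (k n : ℕ) :
    Kterm υ a k y p μ n ≤ (n : ℝ) ^ k * ((υ * Real.exp B) ^ n / (Nat.factorial n : ℝ)) := by
  have hexp : Real.exp ((y + μ) * n - (a * p / 2) * (n : ℝ) ^ 2) ≤ Real.exp (B * n) := by
    gcongr
    nlinarith [mul_le_mul_of_nonneg_right hB n.cast_nonneg, sq_nonneg (n : ℝ)]
  calc Kterm υ a k y p μ n ≤ (n : ℝ) ^ k * (υ ^ n / (Nat.factorial n : ℝ)) * Real.exp (B * n) := by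
        unfold Kterm; gcongr
    _ = (n : ℝ) ^ k * ((υ * Real.exp B) ^ n / (Nat.factorial n : ℝ)) := by
        rw [mul_comm B, Real.exp_nat_mul, mul_pow]; ring

theorem summable_Kterm {y p μ : ℝ} (hυ : 0 ≤ υ) (hap : 0 ≤ a * p) (k : ℕ) :
    Summable (Kterm υ a k y p μ) :=
  Summable.of_nonneg_of_le (Kterm_nonneg hυ k y p μ) (Kterm_le hυ hap le_rfl k)
    (summable_pow_mul_pow_div_factorial k (by positivity))

theorem K_eq_Kmoment_zero (y p μ : ℝ) : K υ a y p μ = Kmoment υ a 0 y p μ :=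
  tsum_congr fun n => by simp [Kterm]

theorem Kmoment_zero_pos {y p μ : ℝ} (hυ : 0 ≤ υ) (hap : 0 ≤ a * p) :
    0 < Kmoment υ a 0 y p μ := by
  have h₀ : Kterm υ a 0 y p μ 0 = 1 := by simp [Kterm]
  calc (0 : ℝ) < Kterm υ a 0 y p μ 0 := by rw [h₀]; exact one_pos
    _ ≤ Kmoment υ a 0 y p μ :=
      (summable_Kterm hυ hap 0).le_tsum 0 fun n _ => Kterm_nonneg hυ 0 y p μ n

theorem hasDerivAt_Kterm {p μ : ℝ} (k n : ℕ) (y : ℝ) :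
    HasDerivAt (fun z => Kterm υ a k z p μ n) (Kterm υ a (k + 1) y p μ n) y := by
  have hexponent :
      HasDerivAt (fun z : ℝ => (z + μ) * n - (a * p / 2) * (n : ℝ) ^ 2) (n : ℝ) y := by
    simpa using (((hasDerivAt_id y).add_const μ).mul_const (n : ℝ)).sub_const
      ((a * p / 2) * (n : ℝ) ^ 2)
  refine (hexponent.exp.const_mul ((n : ℝ) ^ k * (υ ^ n / (Nat.factorial n : ℝ)))).congr_deriv ?_
  unfold Kterm; rw [pow_succ]; ring

theorem hasDerivAt_Kmoment {p μ : ℝ} (hυ : 0 ≤ υ) (hap : 0 ≤ a * p) (k : ℕ) (y : ℝ) :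
    HasDerivAt (fun z => Kmoment υ a k z p μ) (Kmoment υ a (k + 1) y p μ) y := by
  have hy : y ∈ Ioo (y - 1) (y + 1) := ⟨by linarith, by linarith⟩
  refine hasDerivAt_tsum_of_isPreconnected
    (summable_pow_mul_pow_div_factorial (k + 1) (by positivity : 0 ≤ υ * Real.exp (y + 1 + μ)))
    isOpen_Ioo isPreconnected_Ioo (fun n z _ => hasDerivAt_Kterm k n z) (fun n z hz => ?_)
    hy (summable_Kterm hυ hap k) hy
  rw [Real.norm_of_nonneg (Kterm_nonneg hυ _ _ _ _ _)]
  exact Kterm_le hυ hap (by linarith [hz.2]) (k + 1) n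

theorem continuous_Kterm (k n : ℕ) :
    Continuous fun x : ℝ × ℝ × ℝ => Kterm υ a k x.1 x.2.1 x.2.2 n := by
  unfold Kterm; fun_prop

theorem continuousAt_Kmoment (hυ : 0 ≤ υ) (ha : 0 ≤ a) (k : ℕ) {x₀ : ℝ × ℝ × ℝ}
    (hp : 0 < x₀.2.1) :
    ContinuousAt (fun x : ℝ × ℝ × ℝ => Kmoment υ a k x.1 x.2.1 x.2.2) x₀ := by
  set B := x₀.1 + x₀.2.2 + 1
  let U : Set (ℝ × ℝ × ℝ) := {x | x.1 + x.2.2 < B ∧ 0 < x.2.1}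
  have hU : IsOpen U :=
    (isOpen_lt (by fun_prop : Continuous fun x : ℝ × ℝ × ℝ => x.1 + x.2.2) continuous_const).inter
      (isOpen_lt continuous_const (by fun_prop : Continuous fun x : ℝ × ℝ × ℝ => x.2.1))
  have hx₀ : x₀ ∈ U := ⟨by linarith, hp⟩
  refine (continuousOn_tsum (fun n => (continuous_Kterm k n).continuousOn)
    (summable_pow_mul_pow_div_factorial k (by positivity : 0 ≤ υ * Real.exp B))
    fun n x hx => ?_).continuousAt (hU.mem_nhds hx₀)
  rw [Real.norm_of_nonneg (Kterm_nonneg hυ _ _ _ _ _)]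
  exact Kterm_le hυ (mul_nonneg ha hx.2.le) hx.1.le k n

/-- Completing the square, `(y + μ) n - (a p / 2) n² ≤ y² / (2 a p) + μ n`. -/
theorem Kmoment_zero_le {y p μ : ℝ} (hυ : 0 ≤ υ) (hap : 0 < a * p) :
    Kmoment υ a 0 y p μ ≤ Real.exp (y ^ 2 / (2 * (a * p))) * Real.exp (υ * Real.exp μ) := by
  have hterm : ∀ n : ℕ, Kterm υ a 0 y p μ n ≤
      Real.exp (y ^ 2 / (2 * (a * p))) * ((υ * Real.exp μ) ^ n / (Nat.factorial n : ℝ)) := by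
    intro n
    have hsq : (y + μ) * n - (a * p / 2) * (n : ℝ) ^ 2 ≤ y ^ 2 / (2 * (a * p)) + n * μ := by
      have : y * n - (a * p / 2) * (n : ℝ) ^ 2 ≤ y ^ 2 / (2 * (a * p)) := by
        rw [le_div_iff₀ (by positivity)]
        nlinarith [sq_nonneg (y - a * p * n)]
      linarith
    calc Kterm υ a 0 y p μ n
        = (υ ^ n / (Nat.factorial n : ℝ)) * Real.exp ((y + μ) * n - (a * p / 2) * (n : ℝ) ^ 2) := by
          simp [Kterm]
      _ ≤ (υ ^ n / (Nat.factorial n : ℝ)) * Real.exp (y ^ 2 / (2 * (a * p)) + n * μ) := by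
          gcongr
      _ = _ := by rw [Real.exp_add, Real.exp_nat_mul, mul_pow]; ring
  have hexp :
      Real.exp (υ * Real.exp μ) = ∑' n : ℕ, (υ * Real.exp μ) ^ n / (Nat.factorial n : ℝ) := by
    rw [Real.exp_eq_exp_ℝ, NormedSpace.exp_eq_tsum_div]
  rw [hexp, ← tsum_mul_left]
  exact (summable_Kterm hυ hap.le 0).tsum_le_tsum hterm
    ((Real.summable_pow_div_factorial _).mul_left _)

end PartitionFunction

section FreeEnergy

variable {υ a : ℝ}

noncomputable def Ey (υ a y p μ : ℝ) : ℝ :=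
  -y / p + Kmoment υ a 1 y p μ / Kmoment υ a 0 y p μ

noncomputable def Eyy (υ a y p μ : ℝ) : ℝ :=
  -1 / p + (Kmoment υ a 2 y p μ * Kmoment υ a 0 y p μ - Kmoment υ a 1 y p μ ^ 2) /
    Kmoment υ a 0 y p μ ^ 2

theorem E_eq (y p μ : ℝ) :
    E υ a y p μ = -(y ^ 2) / (2 * p) + Real.log (Kmoment υ a 0 y p μ) := by
  rw [E, K_eq_Kmoment_zero]

theorem hasDerivAt_E {p μ : ℝ} (hυ : 0 ≤ υ) (hap : 0 ≤ a * p) (y : ℝ) :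
    HasDerivAt (fun z => E υ a z p μ) (Ey υ a y p μ) y := by
  have hquad : HasDerivAt (fun z : ℝ => -(z ^ 2) / (2 * p)) (-y / p) y :=
    ((hasDerivAt_pow 2 y).neg.div_const (2 * p)).congr_deriv (by field_simp; ring)
  simp only [E_eq]
  exact hquad.add ((hasDerivAt_Kmoment hυ hap 0 y).log (Kmoment_zero_pos hυ hap).ne')

theorem hasDerivAt_Ey {p μ : ℝ} (hυ : 0 ≤ υ) (hap : 0 ≤ a * p) (y : ℝ) :
    HasDerivAt (fun z => Ey υ a z p μ) (Eyy υ a y p μ) y := by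
  have hlin : HasDerivAt (fun z : ℝ => -z / p) (-1 / p) y :=
    ((hasDerivAt_id y).neg.div_const p).congr_deriv (by simp)
  refine (hlin.add ((hasDerivAt_Kmoment hυ hap 1 y).div (hasDerivAt_Kmoment hυ hap 0 y)
    (Kmoment_zero_pos hυ hap).ne')).congr_deriv ?_
  unfold Eyy; ring

theorem deriv_deriv_E {p μ : ℝ} (hυ : 0 ≤ υ) (hap : 0 ≤ a * p) (y : ℝ) :
    deriv (deriv fun z => E υ a z p μ) y = Eyy υ a y p μ := by
  rw [show deriv (fun z => E υ a z p μ) = fun z => Ey υ a z p μ from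
    funext fun z => (hasDerivAt_E hυ hap z).deriv]
  exact (hasDerivAt_Ey hυ hap y).deriv

theorem continuousAt_E (hυ : 0 ≤ υ) (ha : 0 ≤ a) {x₀ : ℝ × ℝ × ℝ} (hp : 0 < x₀.2.1) :
    ContinuousAt (fun x : ℝ × ℝ × ℝ => E υ a x.1 x.2.1 x.2.2) x₀ := by
  simp only [E_eq]
  exact ((continuous_fst.pow 2).neg.continuousAt.div (by fun_prop) (by positivity)).add
    ((continuousAt_Kmoment hυ ha 0 hp).log (Kmoment_zero_pos hυ (mul_nonneg ha hp.le)).ne')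

theorem continuousAt_Ey (hυ : 0 ≤ υ) (ha : 0 ≤ a) {x₀ : ℝ × ℝ × ℝ} (hp : 0 < x₀.2.1) :
    ContinuousAt (fun x : ℝ × ℝ × ℝ => Ey υ a x.1 x.2.1 x.2.2) x₀ :=
  (continuous_fst.neg.continuousAt.div continuous_snd.fst.continuousAt hp.ne').add
    ((continuousAt_Kmoment hυ ha 1 hp).div (continuousAt_Kmoment hυ ha 0 hp)
      (Kmoment_zero_pos hυ (mul_nonneg ha hp.le)).ne')

theorem continuousAt_Eyy (hυ : 0 ≤ υ) (ha : 0 ≤ a) {x₀ : ℝ × ℝ × ℝ} (hp : 0 < x₀.2.1) :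
    ContinuousAt (fun x : ℝ × ℝ × ℝ => Eyy υ a x.1 x.2.1 x.2.2) x₀ :=
  (continuousAt_const.div continuous_snd.fst.continuousAt hp.ne').add
    ((((continuousAt_Kmoment hυ ha 2 hp).mul (continuousAt_Kmoment hυ ha 0 hp)).sub
      ((continuousAt_Kmoment hυ ha 1 hp).pow 2)).div ((continuousAt_Kmoment hυ ha 0 hp).pow 2)
      (pow_ne_zero 2 (Kmoment_zero_pos hυ (mul_nonneg ha hp.le)).ne'))

theorem E_le {y p μ : ℝ} (hυ : 0 ≤ υ) (ha : 0 < a) (hp : 0 < p) :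
    E υ a y p μ ≤ -((1 - 1 / a) / (2 * p)) * y ^ 2 + υ * Real.exp μ := by
  have hap : 0 < a * p := mul_pos ha hp
  have hlog : Real.log (Kmoment υ a 0 y p μ) ≤ y ^ 2 / (2 * (a * p)) + υ * Real.exp μ := by
    rw [← Real.log_exp (_ + _), Real.exp_add]
    exact Real.log_le_log (Kmoment_zero_pos hυ hap.le) (Kmoment_zero_le hυ hap)
  have hquad : -(y ^ 2) / (2 * p) + y ^ 2 / (2 * (a * p)) = -((1 - 1 / a) / (2 * p)) * y ^ 2 := by
    field_simp; ring
  rw [E_eq]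
  linarith

theorem tendsto_E_cocompact (hυ : 0 ≤ υ) (ha : 1 < a) {q₀ : ℝ × ℝ} (hp : 0 < q₀.1) :
    Tendsto (fun x : ℝ × ℝ × ℝ => E υ a x.1 x.2.1 x.2.2) (cocompact ℝ ×ˢ 𝓝 q₀) atBot := by
  set c := (1 - 1 / a) / (4 * q₀.1)
  set C := υ * Real.exp (q₀.2 + 1)
  have hc : 0 < c := div_pos (by rw [sub_pos, div_lt_one (by linarith)]; exact ha) (by positivity)
  -- For parameters with `p ≤ 2 p₀` and `μ ≤ μ₀ + 1` the bound `E_le` becomes uniform.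
  have hbound : ∀ᶠ x : ℝ × ℝ × ℝ in cocompact ℝ ×ˢ 𝓝 q₀,
      E υ a x.1 x.2.1 x.2.2 ≤ -c * x.1 ^ 2 + C := by
    have hnear : ∀ᶠ q : ℝ × ℝ in 𝓝 q₀, q₀.1 / 2 < q.1 ∧ q.1 < 2 * q₀.1 ∧ q.2 < q₀.2 + 1 :=
      ((continuous_fst.tendsto q₀).eventually (lt_mem_nhds (by linarith))).and
        (((continuous_fst.tendsto q₀).eventually (gt_mem_nhds (by linarith))).and
          ((continuous_snd.tendsto q₀).eventually (gt_mem_nhds (by linarith))))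
    filter_upwards [tendsto_snd.eventually hnear] with x ⟨hp₁, hp₂, hμ⟩
    have hp' : 0 < x.2.1 := by linarith
    have hcoef : c ≤ (1 - 1 / a) / (2 * x.2.1) :=
      div_le_div_of_nonneg_left (by rw [sub_nonneg, div_le_one (by linarith)]; exact ha.le)
        (by positivity) (by linarith)
    have hexp : υ * Real.exp x.2.2 ≤ C :=
      mul_le_mul_of_nonneg_left (Real.exp_le_exp.2 hμ.le) hυ
    linarith [E_le (y := x.1) (μ := x.2.2) hυ (by linarith : (0 : ℝ) < a) hp',
      mul_le_mul_of_nonneg_right hcoef (sq_nonneg x.1)]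
  refine tendsto_atBot_mono' _ hbound (tendsto_atBot_add_const_right _ C ?_)
  have hsq : Tendsto (fun y : ℝ => y ^ 2) (cocompact ℝ) atTop :=
    ((tendsto_pow_atTop two_ne_zero).comp tendsto_norm_cocompact_atTop).congr fun y => by simp
  exact (tendsto_neg_atTop_atBot.comp (hsq.const_mul_atTop hc)).comp tendsto_fst |>.congr
    fun x => by simp [neg_mul]

end FreeEnergy

theorem stmt_2 (υ a : ℝ) (hυ : 0 < υ) (ha : 1 < a) :
    IsOpen {q : ℝ × ℝ | 0 < q.1 ∧ ∃ ybar : ℝ,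
      (∀ y : ℝ, E υ a y q.1 q.2 ≤ E υ a ybar q.1 q.2) ∧
      (∀ y' : ℝ, (∀ y : ℝ, E υ a y q.1 q.2 ≤ E υ a y' q.1 q.2) → y' = ybar) ∧
      deriv (deriv (fun y => E υ a y q.1 q.2)) ybar < 0} := by
  have ha₀ : 0 ≤ a := by linarith
  refine isOpen_iff_mem_nhds.2 fun q₀ ⟨hp₀, ybar, hmax, huniq, hneg⟩ => ?_
  have hpos : ∀ᶠ q : ℝ × ℝ in 𝓝 q₀, 0 < q.1 :=
    (continuous_fst.tendsto q₀).eventually (lt_mem_nhds hp₀)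
  have hstable := eventually_exists_forall_ne_lt_of_deriv2_neg
    (f := fun y (q : ℝ × ℝ) => E υ a y q.1 q.2) (f' := fun y (q : ℝ × ℝ) => Ey υ a y q.1 q.2)
    (f'' := fun y (q : ℝ × ℝ) => Eyy υ a y q.1 q.2)
    (hpos.mono fun q hq => hasDerivAt_E hυ.le (mul_nonneg ha₀ hq.le))
    (hpos.mono fun q hq => hasDerivAt_Ey hυ.le (mul_nonneg ha₀ hq.le))
    (fun y => continuousAt_E hυ.le ha₀ (x₀ := (y, q₀)) hp₀)
    (fun y => continuousAt_Ey hυ.le ha₀ (x₀ := (y, q₀)) hp₀)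
    (continuousAt_Eyy hυ.le ha₀ (x₀ := (ybar, q₀)) hp₀) (tendsto_E_cocompact hυ.le ha hp₀)
    (forall_ne_lt_iff_forall_le_and_unique.2 ⟨hmax, huniq⟩)
    (deriv_deriv_E hυ.le (mul_nonneg ha₀ hp₀.le) ybar ▸ hneg)
  filter_upwards [hpos, hstable] with q hq ⟨c, hcmax, hc⟩
  obtain ⟨hcle, hcuniq⟩ := forall_ne_lt_iff_forall_le_and_unique.1 hcmax
  exact ⟨hq, c, hcle, hcuniq, (deriv_deriv_E hυ.le (mul_nonneg ha₀ hq.le) c).symm ▸ hc⟩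
end

section
/- For every N ∈ ℕ with N ≥ 1, every p > 0 and every μ ∈ ℝ, the function y ↦ exp(N·E(y,p,μ)) is integrable on ℝ (its Lebesgue integral over ℝ is finite); here the assumption a > 1 is essential. -/
/-!
Each term of the series for `K` is bounded by completing the square,
`(y + μ) n - (a p / 2) n² ≤ (y + μ)² / (2 a p)`, so `1 ≤ K ≤ exp (υ + (y + μ)² / (2 a p))`
(the lower bound is the `n = 0` term). Hence
`E ≤ -(a - 1) y² / (2 a p) + (linear in y)`, and since `a > 1` the integrand `exp (N E)` is
dominated by an integrable Gaussian.
-/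

open Real MeasureTheory

noncomputable def KTerm (υ a y p μ : ℝ) (n : ℕ) : ℝ :=
  (υ ^ n / (Nat.factorial n : ℝ)) * exp ((y + μ) * n - (a * p / 2) * (n : ℝ) ^ 2)

lemma K_eq_tsum_KTerm (υ a y p μ : ℝ) : K υ a y p μ = ∑' n, KTerm υ a y p μ n := rfl

lemma integrable_exp_quadratic {b : ℝ} (hb : 0 < b) (c d : ℝ) :
    Integrable (fun y : ℝ => exp (-b * y ^ 2 + c * y + d)) := by
  refine (integrable_cexp_quadratic (b := (b : ℂ)) (by simpa using hb) c d).norm.congr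
    (Filter.Eventually.of_forall fun y => ?_)
  have hreal : -(b : ℂ) * (y : ℂ) ^ 2 + c * y + d = ((-b * y ^ 2 + c * y + d : ℝ) : ℂ) := by
    push_cast; ring
  simp only [hreal, Complex.norm_exp, Complex.ofReal_re]

section PartitionFunction

variable {υ a p : ℝ}

lemma KTerm_nonneg (hυ : 0 ≤ υ) (y μ : ℝ) (n : ℕ) : 0 ≤ KTerm υ a y p μ n := by
  unfold KTerm; positivity

lemma KTerm_le (hυ : 0 ≤ υ) (hap : 0 < a * p) (y μ : ℝ) (n : ℕ) :
    KTerm υ a y p μ n ≤ υ ^ n / (Nat.factorial n : ℝ) * exp ((y + μ) ^ 2 / (2 * (a * p))) := by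
  refine mul_le_mul_of_nonneg_left (exp_le_exp.mpr ?_) (by positivity)
  rw [le_div_iff₀ (by positivity)]
  nlinarith [sq_nonneg (a * p * n - (y + μ))]

lemma summable_KTerm (hυ : 0 ≤ υ) (hap : 0 < a * p) (y μ : ℝ) :
    Summable (KTerm υ a y p μ) :=
  .of_nonneg_of_le (KTerm_nonneg hυ y μ) (KTerm_le hυ hap y μ)
    ((summable_pow_div_factorial υ).mul_right _)

lemma one_le_K (hυ : 0 ≤ υ) (hap : 0 < a * p) (y μ : ℝ) : 1 ≤ K υ a y p μ := by
  rw [K_eq_tsum_KTerm]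
  simpa [KTerm] using (summable_KTerm hυ hap y μ).le_tsum 0 fun n _ => KTerm_nonneg hυ y μ n

lemma K_le_exp (hυ : 0 ≤ υ) (hap : 0 < a * p) (y μ : ℝ) :
    K υ a y p μ ≤ exp (υ + (y + μ) ^ 2 / (2 * (a * p))) := by
  have hexp : ∑' n : ℕ, υ ^ n / (Nat.factorial n : ℝ) = exp υ := by
    rw [exp_eq_exp_ℝ, NormedSpace.exp_eq_tsum_div]
  rw [K_eq_tsum_KTerm]
  calc ∑' n, KTerm υ a y p μ n
      ≤ ∑' n : ℕ, υ ^ n / (Nat.factorial n : ℝ) * exp ((y + μ) ^ 2 / (2 * (a * p))) :=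
        (summable_KTerm hυ hap y μ).tsum_le_tsum (KTerm_le hυ hap y μ)
          ((summable_pow_div_factorial υ).mul_right _)
    _ = exp (υ + (y + μ) ^ 2 / (2 * (a * p))) := by rw [tsum_mul_right, hexp, exp_add]

lemma measurable_K (hυ : 0 ≤ υ) (hap : 0 < a * p) (μ : ℝ) :
    Measurable fun y => K υ a y p μ := by
  refine measurable_of_tendsto_metrizable (f := fun m y => ∑ n ∈ Finset.range m, KTerm υ a y p μ n)
    (fun m => Finset.measurable_sum _ fun n _ => ?_) (tendsto_pi_nhds.mpr fun y =>
      (summable_KTerm hυ hap y μ).hasSum.tendsto_sum_nat)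
  exact ((((measurable_id.add_const μ).mul_const _).sub_const _).exp).const_mul _

lemma measurable_E (hυ : 0 ≤ υ) (hap : 0 < a * p) (μ : ℝ) :
    Measurable fun y => E υ a y p μ :=
  ((measurable_id.pow_const 2).neg.div_const _).add
    (measurable_log.comp (measurable_K hυ hap μ))

lemma E_le_quadratic (hυ : 0 ≤ υ) (hap : 0 < a * p) (y μ : ℝ) :
    E υ a y p μ ≤
      -((a - 1) / (2 * (a * p))) * y ^ 2 + μ / (a * p) * y + (υ + μ ^ 2 / (2 * (a * p))) := by
  have hlog : log (K υ a y p μ) ≤ υ + (y + μ) ^ 2 / (2 * (a * p)) :=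
    (log_le_iff_le_exp (by linarith [one_le_K hυ hap y μ])).mpr (K_le_exp hυ hap y μ)
  calc E υ a y p μ ≤ -(y ^ 2) / (2 * p) + (υ + (y + μ) ^ 2 / (2 * (a * p))) := by
        unfold E; linarith
    _ = _ := by
        have ha : a ≠ 0 := left_ne_zero_of_mul hap.ne'
        have hp : p ≠ 0 := right_ne_zero_of_mul hap.ne'
        field_simp
        ring

end PartitionFunction

theorem stmt_6 (υ a : ℝ) (hυ : 0 < υ) (ha : 1 < a) (N : ℕ) (hN : 1 ≤ N)
    (p μ : ℝ) (hp : 0 < p) :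
    MeasureTheory.Integrable (fun y : ℝ => Real.exp (N * E υ a y p μ)) := by
  have hap : 0 < a * p := by nlinarith
  have hN' : (0 : ℝ) < N := by exact_mod_cast hN
  have hb : 0 < N * ((a - 1) / (2 * (a * p))) := mul_pos hN' (div_pos (by linarith) (by positivity))
  refine (integrable_exp_quadratic hb (N * (μ / (a * p))) (N * (υ + μ ^ 2 / (2 * (a * p))))).mono'
    ((measurable_E hυ.le hap μ).const_mul _).exp.aestronglyMeasurable
    (Filter.Eventually.of_forall fun y => ?_)
  rw [norm_of_nonneg (exp_pos _).le, exp_le_exp]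
  calc (N : ℝ) * E υ a y p μ
      ≤ N * (-((a - 1) / (2 * (a * p))) * y ^ 2 + μ / (a * p) * y + (υ + μ ^ 2 / (2 * (a * p)))) :=
        mul_le_mul_of_nonneg_left (E_le_quadratic hυ.le hap y μ) hN'.le
    _ = _ := by ring
end
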